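/- The complement of the set of fibbinary numbers in the positive integers equals the disjoint union over k ≥ 1 of the sets Φ_k = { 2^r · (q + (2k-1) · 2^{L(q)}) : r ≥ 0, q an odd fibbinary number }, where L(q) is the number of binary digits of q. -/

import Mathlib

/-- A natural number is fibbinary if its binary representation has no two consecutive 1 bits. -/
def Fibbinary (m : ℕ) : Prop := ∀ i : ℕ, ¬(m.testBit i ∧ m.testBit (i + 1))

/-- For `k ≥ 1`, `Φ_k = { 2^r·(q + (2k-1)·2^{L(q)}) : r ≥ 0, q odd fibbinary }`. -/
def Phi (k : ℕ) : Set ℕ :=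
  {m : ℕ | ∃ r q : ℕ, Odd q ∧ Fibbinary q ∧
    m = 2 ^ r * (q + (2 * k - 1) * 2 ^ Nat.size q)}

/-!
Write `m = 2 ^ r * n` with `n` odd; `m` is fibbinary iff `n` is. If `n` has adjacent ones, cut it
just above the lowest such pair, at bits `j, j + 1`: then `n = q + t * 2 ^ L(q)` with
`q = n % 2 ^ (j + 1)` odd fibbinary of length `j + 1` and `t` odd, i.e. `t = 2k - 1`. Conversely,
in `q + t * 2 ^ L(q)` with `t` odd the bits `L(q) - 1` and `L(q)` are adjacent ones while all
lower bits are those of the fibbinary `q`, so the number determines the cut point `L(q)`, hence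
`q`, `t` and `k`; this gives disjointness.
-/

namespace Nat

theorem testBit_zero_eq_true_iff_odd {n : ℕ} : n.testBit 0 = true ↔ Odd n := by
  simp [Nat.odd_iff]

theorem testBit_size_sub_one {q : ℕ} (hq : q ≠ 0) : q.testBit (q.size - 1) = true := by
  have hs : 0 < q.size := size_pos.mpr (pos_of_ne_zero hq)
  by_contra h
  refine (lt_size.mp (Nat.sub_lt hs one_pos)).not_gt (lt_pow_two_of_testBit q fun i hi => ?_)
  rcases hi.eq_or_lt with rfl | hi
  · simpa using h
  · exact testBit_lt_two_pow <|
      (lt_size_self q).trans_le (Nat.pow_le_pow_right two_pos (by omega))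

theorem testBit_add_mul_two_pow {q s : ℕ} (t : ℕ) (hq : q < 2 ^ s) (i : ℕ) :
    (q + t * 2 ^ s).testBit i = if i < s then q.testBit i else t.testBit (i - s) := by
  rw [add_comm, mul_comm, testBit_two_pow_mul_add t hq]

theorem padicValNat_two_pow_mul_of_odd {n : ℕ} (r : ℕ) (hn : Odd n) :
    padicValNat 2 (2 ^ r * n) = r := by
  rw [padicValNat.mul (by positivity) hn.pos.ne', padicValNat.prime_pow,
    padicValNat.eq_zero_of_not_dvd (by simpa [← even_iff_two_dvd] using hn), add_zero]

theorem two_pow_mul_odd_inj {r₁ r₂ n₁ n₂ : ℕ} (hn₁ : Odd n₁) (hn₂ : Odd n₂)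
    (h : 2 ^ r₁ * n₁ = 2 ^ r₂ * n₂) : r₁ = r₂ ∧ n₁ = n₂ := by
  obtain rfl : r₁ = r₂ := by
    rw [← padicValNat_two_pow_mul_of_odd r₁ hn₁, h, padicValNat_two_pow_mul_of_odd r₂ hn₂]
  exact ⟨rfl, Nat.eq_of_mul_eq_mul_left (by positivity) h⟩

end Nat

open Nat

theorem fibbinary_two_pow_mul_iff {n : ℕ} (r : ℕ) : Fibbinary (2 ^ r * n) ↔ Fibbinary n := by
  refine ⟨fun h i hi => h (i + r) ?_, fun h i hi => h (i - r) ?_⟩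
  · simpa [testBit_two_pow_mul, Nat.add_right_comm i r 1] using hi
  · simp only [testBit_two_pow_mul, Bool.and_eq_true, decide_eq_true_eq] at hi
    exact ⟨hi.1.2, by rw [← hi.2.2]; congr 1; omega⟩

section Decomposition

variable {q t : ℕ}

theorem testBit_add_mul_two_pow_size_of_odd (hq : q ≠ 0) (ht : Odd t) :
    (q + t * 2 ^ q.size).testBit (q.size - 1) = true ∧
      (q + t * 2 ^ q.size).testBit q.size = true := by
  have hs : 0 < q.size := size_pos.mpr (pos_of_ne_zero hq)
  simp only [testBit_add_mul_two_pow t (lt_size_self q), Nat.sub_lt hs one_pos, if_true,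
    lt_irrefl, if_false, Nat.sub_self, testBit_size_sub_one hq, testBit_zero_eq_true_iff_odd]
  exact ⟨trivial, ht⟩

theorem not_fibbinary_add_mul_two_pow_size (hq : q ≠ 0) (ht : Odd t) :
    ¬Fibbinary (q + t * 2 ^ q.size) := by
  have hs : 0 < q.size := size_pos.mpr (pos_of_ne_zero hq)
  intro h
  apply h (q.size - 1)
  rw [Nat.sub_add_cancel hs]
  exact testBit_add_mul_two_pow_size_of_odd hq ht

theorem size_mod_two_pow_succ {n j : ℕ} (h : n.testBit j = true) :
    (n % 2 ^ (j + 1)).size = j + 1 := by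
  refine le_antisymm (size_le.mpr (mod_lt _ (by positivity))) (lt_size.mpr ?_)
  exact ge_two_pow_of_testBit (by simpa [testBit_mod_two_pow] using h)

theorem exists_odd_fibbinary_add_mul_two_pow_size {n : ℕ} (hn : Odd n) (h : ¬Fibbinary n) :
    ∃ q t, Odd q ∧ Fibbinary q ∧ Odd t ∧ n = q + t * 2 ^ q.size := by
  have hex : ∃ j, n.testBit j ∧ n.testBit (j + 1) := by simpa [Fibbinary] using h
  set j := Nat.find hex
  obtain ⟨hj, hj'⟩ := Nat.find_spec hex
  have hsize := size_mod_two_pow_succ hj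
  refine ⟨n % 2 ^ (j + 1), n / 2 ^ (j + 1), ?_, ?_, ?_, ?_⟩
  · rw [← testBit_zero_eq_true_iff_odd, testBit_mod_two_pow]
    simp [testBit_zero_eq_true_iff_odd.mpr hn]
  · intro i hi
    simp only [testBit_mod_two_pow, Bool.and_eq_true, decide_eq_true_eq] at hi
    exact Nat.find_min hex (m := i) (by omega) ⟨hi.1.2, hi.2.2⟩
  · rwa [← testBit_zero_eq_true_iff_odd, testBit_div_two_pow, zero_add]
  · rw [hsize, Nat.mod_add_div']

theorem Odd.add_mul_two_pow_size (hq : Odd q) (t : ℕ) : Odd (q + t * 2 ^ q.size) :=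
  hq.add_even ((Nat.even_pow.mpr ⟨even_two, (size_pos.mpr hq.pos).ne'⟩).mul_left t)

theorem size_le_of_add_mul_two_pow_size_eq {q₁ t₁ q₂ t₂ : ℕ} (hq₁ : q₁ ≠ 0) (ht₁ : Odd t₁)
    (hq₂ : Fibbinary q₂) (h : q₁ + t₁ * 2 ^ q₁.size = q₂ + t₂ * 2 ^ q₂.size) :
    q₂.size ≤ q₁.size := by
  by_contra! hlt
  have hs : 0 < q₁.size := size_pos.mpr (pos_of_ne_zero hq₁)
  obtain ⟨h₁, h₂⟩ := testBit_add_mul_two_pow_size_of_odd hq₁ ht₁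
  rw [h, testBit_add_mul_two_pow t₂ (lt_size_self q₂), if_pos (by omega)] at h₁ h₂
  exact hq₂ (q₁.size - 1) ⟨h₁, by rwa [Nat.sub_add_cancel hs]⟩

theorem add_mul_two_pow_size_inj {q₁ t₁ q₂ t₂ : ℕ} (hq₁ : q₁ ≠ 0) (hq₂ : q₂ ≠ 0)
    (hf₁ : Fibbinary q₁) (hf₂ : Fibbinary q₂) (ht₁ : Odd t₁) (ht₂ : Odd t₂)
    (h : q₁ + t₁ * 2 ^ q₁.size = q₂ + t₂ * 2 ^ q₂.size) : q₁ = q₂ ∧ t₁ = t₂ := by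
  have hsize : q₁.size = q₂.size :=
    le_antisymm (size_le_of_add_mul_two_pow_size_eq hq₂ ht₂ hf₁ h.symm)
      (size_le_of_add_mul_two_pow_size_eq hq₁ ht₁ hf₂ h)
  have hq : q₁ = q₂ := calc
    q₁ = (q₁ + t₁ * 2 ^ q₁.size) % 2 ^ q₁.size := by
      rw [Nat.add_mul_mod_self_right, mod_eq_of_lt (lt_size_self q₁)]
    _ = (q₂ + t₂ * 2 ^ q₂.size) % 2 ^ q₂.size := by rw [h, hsize]
    _ = q₂ := by rw [Nat.add_mul_mod_self_right, mod_eq_of_lt (lt_size_self q₂)]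
  subst hq
  exact ⟨rfl, Nat.eq_of_mul_eq_mul_right (by positivity) (Nat.add_left_cancel h)⟩

end Decomposition

theorem pos_and_not_fibbinary_iff {m : ℕ} :
    0 < m ∧ ¬Fibbinary m ↔
      ∃ r q t, Odd q ∧ Fibbinary q ∧ Odd t ∧ m = 2 ^ r * (q + t * 2 ^ q.size) := by
  constructor
  · rintro ⟨hm, hfib⟩
    obtain ⟨r, n, hn, rfl⟩ := exists_eq_two_pow_mul_odd hm.ne'
    rw [fibbinary_two_pow_mul_iff] at hfib
    obtain ⟨q, t, hq, hqf, ht, rfl⟩ := exists_odd_fibbinary_add_mul_two_pow_size hn hfib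
    exact ⟨r, q, t, hq, hqf, ht, rfl⟩
  · rintro ⟨r, q, t, hq, -, ht, rfl⟩
    refine ⟨by have := hq.pos; positivity, ?_⟩
    rw [fibbinary_two_pow_mul_iff]
    exact not_fibbinary_add_mul_two_pow_size hq.pos.ne' ht

theorem exists_mem_Phi_iff {m : ℕ} :
    (∃ k ≥ 1, m ∈ Phi k) ↔
      ∃ r q t, Odd q ∧ Fibbinary q ∧ Odd t ∧ m = 2 ^ r * (q + t * 2 ^ q.size) := by
  constructor
  · rintro ⟨k, hk, r, q, hq, hqf, rfl⟩
    exact ⟨r, q, 2 * k - 1, hq, hqf, Nat.odd_iff.mpr (by omega), rfl⟩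
  · rintro ⟨r, q, t, hq, hqf, ⟨c, rfl⟩, rfl⟩
    exact ⟨c + 1, by omega, r, q, hq, hqf, by rw [show 2 * (c + 1) - 1 = 2 * c + 1 by omega]⟩

theorem eq_of_mem_Phi_of_mem_Phi {k₁ k₂ m : ℕ} (hk₁ : 1 ≤ k₁) (hk₂ : 1 ≤ k₂)
    (h₁ : m ∈ Phi k₁) (h₂ : m ∈ Phi k₂) : k₁ = k₂ := by
  obtain ⟨r₁, q₁, hq₁, hf₁, rfl⟩ := h₁
  obtain ⟨r₂, q₂, hq₂, hf₂, h⟩ := h₂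
  have hn := (two_pow_mul_odd_inj (hq₁.add_mul_two_pow_size _) (hq₂.add_mul_two_pow_size _) h).2
  have ht := (add_mul_two_pow_size_inj hq₁.pos.ne' hq₂.pos.ne' hf₁ hf₂
    (Nat.odd_iff.mpr (by omega)) (Nat.odd_iff.mpr (by omega)) hn).2
  omega

theorem nonfibbinary_partition :
    {m : ℕ | 0 < m ∧ ¬ Fibbinary m} = ⋃ k ∈ Set.Ici 1, Phi k ∧
    ∀ k₁ ∈ Set.Ici 1, ∀ k₂ ∈ Set.Ici 1, k₁ ≠ k₂ → Disjoint (Phi k₁) (Phi k₂) := by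
  refine ⟨Set.ext fun m => ?_, fun k₁ hk₁ k₂ hk₂ hne => ?_⟩
  · simp only [Set.mem_ofPred_eq, Set.mem_iUnion, Set.mem_Ici, exists_prop]
    rw [pos_and_not_fibbinary_iff, ← exists_mem_Phi_iff]
  · exact Set.disjoint_left.mpr fun m h₁ h₂ => hne (eq_of_mem_Phi_of_mem_Phi hk₁ hk₂ h₁ h₂)
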